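/- arXiv:gr-qc/0404061 — 2 statements merged into one kernel-verified Lean document; each statement's English description precedes it below -/
import Mathlib

section
/- Let γ̃ > 0, t₀ > 0 and let F : [0, t₀) → ℝ be continuous on [0, t₀), smooth (C^∞) on the open interval (0, t₀), and positive on [0, t₀). Then there exist a ∈ (0, +∞] and a function φ : [0, a) → ℝ such that φ is continuously differentiable on [0, a) and smooth on (0, a), φ(0) = 0, 0 ≤ φ(τ) < t₀ for all τ ∈ [0, a), φ is strictly increasing, φ′(τ) = γ̃·√(F(φ(τ))) for all τ ∈ [0, a), and lim_{τ→a} φ(τ) = t₀. -/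
/-- **Existence of branes.**
Let `γ > 0`, `t₀ > 0` and let `F` be continuous on `[0, t₀)`, smooth on `(0, t₀)` and
positive on `[0, t₀)`.  Then there exist `a ∈ (0, +∞]` and `φ` defined on
`S = [0, a)` which is `C¹` on `S` (in the sense of one-sided derivatives), smooth on
`(0, a)`, with `φ 0 = 0`, `0 ≤ φ < t₀` on `S`, `φ` strictly increasing on `S`,
`φ' = γ √(F ∘ φ)` on `S`, and `φ → t₀` as `τ → a` within `S`. -/
theorem brane_existence
    (γ t₀ : ℝ) (hγ : 0 < γ) (ht₀ : 0 < t₀)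
    (F : ℝ → ℝ)
    (hFc : ContinuousOn F (Set.Ico 0 t₀))
    (hFs : ContDiffOn ℝ (⊤ : ℕ∞) F (Set.Ioo 0 t₀))
    (hFpos : ∀ t ∈ Set.Ico (0:ℝ) t₀, 0 < F t) :
    ∃ a : EReal, 0 < a ∧ ∃ φ : ℝ → ℝ,
      (∀ τ ∈ {τ : ℝ | 0 ≤ τ ∧ (τ : EReal) < a},
        HasDerivWithinAt φ (γ * Real.sqrt (F (φ τ)))
          {τ : ℝ | 0 ≤ τ ∧ (τ : EReal) < a} τ)
      ∧ ContinuousOn (fun τ => γ * Real.sqrt (F (φ τ)))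
          {τ : ℝ | 0 ≤ τ ∧ (τ : EReal) < a}
      ∧ ContDiffOn ℝ (⊤ : ℕ∞) φ {τ : ℝ | 0 < τ ∧ (τ : EReal) < a}
      ∧ φ 0 = 0
      ∧ (∀ τ ∈ {τ : ℝ | 0 ≤ τ ∧ (τ : EReal) < a}, 0 ≤ φ τ ∧ φ τ < t₀)
      ∧ StrictMonoOn φ {τ : ℝ | 0 ≤ τ ∧ (τ : EReal) < a}
      ∧ Filter.Tendsto φ
          (Filter.comap (fun x : ℝ => (x : EReal)) (nhds a)
            ⊓ Filter.principal {τ : ℝ | 0 ≤ τ ∧ (τ : EReal) < a})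
          (nhds t₀) := by
  classical
  -- the integrand `g = (γ √(F (max t 0)))⁻¹`, extended to the left of `0`
  set g : ℝ → ℝ := fun t => (γ * Real.sqrt (F (max t 0)))⁻¹ with hg_def
  have h0t₀ : (0:ℝ) ∈ Set.Iio t₀ := ht₀
  have hmaps : Set.MapsTo (fun t : ℝ => max t 0) (Set.Iio t₀) (Set.Ico 0 t₀) :=
    fun t ht => ⟨le_max_right _ _, max_lt ht ht₀⟩
  have hFm_cont : ContinuousOn (fun t : ℝ => F (max t 0)) (Set.Iio t₀) :=
    hFc.comp ((continuous_id.max continuous_const).continuousOn) hmaps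
  have hFm_pos : ∀ t < t₀, 0 < F (max t 0) := fun t ht => hFpos _ (hmaps ht)
  have hgpos : ∀ t < t₀, 0 < g t := fun t ht =>
    inv_pos.2 (mul_pos hγ (Real.sqrt_pos.2 (hFm_pos t ht)))
  have hgc : ContinuousOn g (Set.Iio t₀) := by
    apply ContinuousOn.inv₀
    · exact continuousOn_const.mul (Real.continuous_sqrt.comp_continuousOn hFm_cont)
    · intro t ht; exact (mul_pos hγ (Real.sqrt_pos.2 (hFm_pos t ht))).ne'
  -- the primitive G
  set G : ℝ → ℝ := fun t => ∫ s in (0:ℝ)..t, g s with hG_def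
  have hG0 : G 0 = 0 := intervalIntegral.integral_same
  have hInt : ∀ t < t₀, IntervalIntegrable g MeasureTheory.volume 0 t := by
    intro t ht
    exact (hgc.mono ((Set.ordConnected_Iio).uIcc_subset h0t₀ ht)).intervalIntegrable
  have hGd : ∀ t < t₀, HasDerivAt G (g t) t := by
    intro t ht
    exact intervalIntegral.integral_hasDerivAt_right (hInt t ht)
      (hgc.stronglyMeasurableAtFilter isOpen_Iio t ht)
      (hgc.continuousAt (Iio_mem_nhds ht))
  have hGc : ContinuousOn G (Set.Iio t₀) := fun t ht =>
    (hGd t ht).continuousAt.continuousWithinAt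
  have hGmono : StrictMonoOn G (Set.Iio t₀) := by
    apply strictMonoOn_of_deriv_pos (convex_Iio t₀) hGc
    intro t ht
    rw [interior_Iio] at ht
    rw [(hGd t ht).deriv]
    exact hgpos t ht
  -- on the negatives, G is linear
  set c : ℝ := (γ * Real.sqrt (F 0))⁻¹ with hc_def
  have hcpos : 0 < c :=
    inv_pos.2 (mul_pos hγ (Real.sqrt_pos.2 (hFpos 0 ⟨le_rfl, ht₀⟩)))
  have hGneg : ∀ s ≤ (0:ℝ), G s = s * c := by
    intro s hs
    have hcongr : ∀ x ∈ Set.uIcc (0:ℝ) s, g x = c := by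
      intro x hx
      have hx0 : x ≤ 0 := by
        rcases Set.mem_uIcc.1 hx with h | h
        · exact le_trans h.2 hs
        · exact h.2
      simp [hg_def, hc_def, max_eq_right hx0]
    calc G s = ∫ x in (0:ℝ)..s, c := intervalIntegral.integral_congr hcongr
    _ = s * c := by simp
  -- surjectivity of G onto an interval
  have hsurj : ∀ y : ℝ, (∃ t, t < t₀ ∧ y < G t) → ∃ t, t < t₀ ∧ G t = y := by
    rintro y ⟨t, ht, hyt⟩
    set s : ℝ := min t (min 0 ((y - 1)/c)) with hs_def
    have hs0 : s ≤ 0 := le_trans (min_le_right _ _) (min_le_left _ _)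
    have hst : s ≤ t := min_le_left _ _
    have hGs : G s ≤ y := by
      rw [hGneg s hs0]
      have h1 : s ≤ (y - 1)/c := le_trans (min_le_right _ _) (min_le_right _ _)
      have h2 : s * c ≤ ((y - 1)/c) * c := mul_le_mul_of_nonneg_right h1 hcpos.le
      rw [div_mul_cancel₀ _ hcpos.ne'] at h2
      linarith
    have hsub : Set.Icc s t ⊆ Set.Iio t₀ := fun x hx => lt_of_le_of_lt hx.2 ht
    obtain ⟨u, hu, hGu⟩ := intermediate_value_Icc hst (hGc.mono hsub) ⟨hGs, hyt.le⟩
    exact ⟨u, lt_of_le_of_lt hu.2 ht, hGu⟩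
  -- the domain of the inverse
  set D : Set ℝ := {y | ∃ t, t < t₀ ∧ y < G t} with hD_def
  have hDopen : IsOpen D := by
    rw [isOpen_iff_mem_nhds]
    rintro y ⟨t, ht, hyt⟩
    exact Filter.mem_of_superset (Iio_mem_nhds hyt) (fun z hz => ⟨t, ht, hz⟩)
  have hGtD : ∀ t, t < t₀ → G t ∈ D := by
    intro t ht
    refine ⟨(t + t₀)/2, by linarith, ?_⟩
    exact hGmono ht (by linarith : (t + t₀)/2 < t₀) (by linarith)
  have h0D : (0:ℝ) ∈ D := hG0 ▸ hGtD 0 ht₀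
  -- the inverse function φ
  set φ : ℝ → ℝ := fun y => sSup {t | t < t₀ ∧ G t ≤ y} with hφ_def
  have hφG : ∀ t, t < t₀ → φ (G t) = t := by
    intro t ht
    apply IsGreatest.csSup_eq
    constructor
    · exact ⟨ht, le_rfl⟩
    · rintro u ⟨hu, hGu⟩
      by_contra hlt
      push_neg at hlt
      exact absurd hGu (not_le.2 (hGmono ht hu hlt))
  have hφspec : ∀ y ∈ D, ∃ t, t < t₀ ∧ G t = y ∧ φ y = t := by
    intro y hy
    obtain ⟨t, ht, hGt⟩ := hsurj y hy
    exact ⟨t, ht, hGt, by rw [← hGt, hφG t ht]⟩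
  have hφlt : ∀ y ∈ D, φ y < t₀ := by
    intro y hy
    obtain ⟨t, ht, _, hφy⟩ := hφspec y hy
    rw [hφy]; exact ht
  have hGφ : ∀ y ∈ D, G (φ y) = y := by
    intro y hy
    obtain ⟨t, _, hGt, hφy⟩ := hφspec y hy
    rw [hφy, hGt]
  have hφ0 : φ 0 = 0 := by
    have := hφG 0 ht₀
    rwa [hG0] at this
  have hφmono : StrictMonoOn φ D := by
    intro y1 h1 y2 h2 h12
    by_contra hle
    push_neg at hle
    have := hGmono.monotoneOn (hφlt y2 h2) (hφlt y1 h1) hle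
    rw [hGφ y1 h1, hGφ y2 h2] at this
    exact absurd h12 (not_lt.2 this)
  have hφcont : ∀ y ∈ D, ContinuousAt φ y := by
    intro y hy
    apply hφmono.continuousAt_of_image_mem_nhds (hDopen.mem_nhds hy)
    have hsub : Set.Iio t₀ ⊆ φ '' D := fun t ht => ⟨G t, hGtD t ht, hφG t ht⟩
    exact Filter.mem_of_superset (Iio_mem_nhds (hφlt y hy)) hsub
  have hφnonneg : ∀ y ∈ D, 0 ≤ y → 0 ≤ φ y := by
    intro y hy h0
    rcases eq_or_lt_of_le h0 with h | h
    · rw [← h, hφ0]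
    · exact le_of_lt (hφ0 ▸ hφmono h0D hy h)
  have hφderiv : ∀ y ∈ D, HasDerivAt φ (γ * Real.sqrt (F (max (φ y) 0))) y := by
    intro y hy
    have hlt := hφlt y hy
    have h := HasDerivAt.of_local_left_inverse (hφcont y hy) (hGd (φ y) hlt)
      (hgpos _ hlt).ne'
      (Filter.eventually_of_mem (hDopen.mem_nhds hy) (fun z hz => hGφ z hz))
    simpa [hg_def, inv_inv] using h
  -- the endpoint a
  set a : EReal := sSup ((fun t : ℝ => ((G t : ℝ) : EReal)) '' Set.Ico 0 t₀) with ha_def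
  have ha_iff : ∀ τ : ℝ, (τ : EReal) < a ↔ ∃ t, 0 ≤ t ∧ t < t₀ ∧ τ < G t := by
    intro τ
    rw [ha_def, lt_sSup_iff]
    constructor
    · rintro ⟨b, ⟨t, ht, rfl⟩, hb⟩
      exact ⟨t, ht.1, ht.2, by simpa using hb⟩
    · rintro ⟨t, h0, ht, hτ⟩
      refine ⟨_, ⟨t, ⟨h0, ht⟩, rfl⟩, ?_⟩
      show (τ : EReal) < ((G t : ℝ) : EReal)
      exact_mod_cast hτ
  have hSmem : ∀ τ : ℝ, (0 ≤ τ ∧ (τ : EReal) < a) ↔ (0 ≤ τ ∧ τ ∈ D) := by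
    intro τ
    constructor
    · rintro ⟨h0, hlt⟩
      obtain ⟨t, _, ht, hτ⟩ := (ha_iff τ).1 hlt
      exact ⟨h0, t, ht, hτ⟩
    · rintro ⟨h0, t, ht, hτ⟩
      refine ⟨h0, (ha_iff τ).2 ⟨t, ?_, ht, hτ⟩⟩
      by_contra hneg
      push_neg at hneg
      have : G t < G 0 := hGmono ht h0t₀ hneg
      rw [hG0] at this
      linarith
  have ha_pos : 0 < a := by
    have hmem : (0:ℝ) ≤ 0 ∧ ((0:ℝ) : EReal) < a := (hSmem 0).2 ⟨le_rfl, h0D⟩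
    have := hmem.2
    rwa [EReal.coe_zero] at this
  refine ⟨a, ha_pos, φ, ?_, ?_, ?_, hφ0, ?_, ?_, ?_⟩
  · -- derivative on S
    rintro τ ⟨h0, hlt⟩
    have hD : τ ∈ D := ((hSmem τ).1 ⟨h0, hlt⟩).2
    have h := (hφderiv τ hD).hasDerivWithinAt
      (s := {τ : ℝ | 0 ≤ τ ∧ (τ : EReal) < a})
    rwa [max_eq_left (hφnonneg τ hD h0)] at h
  · -- continuity of the RHS on S
    have hφcS : ContinuousOn φ {τ : ℝ | 0 ≤ τ ∧ (τ : EReal) < a} := by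
      rintro τ ⟨h0, hlt⟩
      exact (hφcont τ (((hSmem τ).1 ⟨h0, hlt⟩).2)).continuousWithinAt
    have hmapsS : Set.MapsTo φ {τ : ℝ | 0 ≤ τ ∧ (τ : EReal) < a} (Set.Ico 0 t₀) := by
      rintro τ ⟨h0, hlt⟩
      have hD : τ ∈ D := ((hSmem τ).1 ⟨h0, hlt⟩).2
      exact ⟨hφnonneg τ hD h0, hφlt τ hD⟩
    exact continuousOn_const.mul
      (Real.continuous_sqrt.comp_continuousOn (hFc.comp hφcS hmapsS))
  · -- smoothness on (0, a)
    have hU_eq : {τ : ℝ | 0 < τ ∧ (τ : EReal) < a} = Set.Ioi 0 ∩ D := by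
      ext τ
      constructor
      · rintro ⟨h0, hlt⟩
        exact ⟨h0, ((hSmem τ).1 ⟨h0.le, hlt⟩).2⟩
      · rintro ⟨h0, hD⟩
        exact ⟨h0, ((hSmem τ).2 ⟨le_of_lt h0, hD⟩).2⟩
    rw [hU_eq]
    have hUopen : IsOpen (Set.Ioi (0:ℝ) ∩ D) := isOpen_Ioi.inter hDopen
    have hφIoo : ∀ τ ∈ Set.Ioi (0:ℝ) ∩ D, φ τ ∈ Set.Ioo 0 t₀ := by
      rintro τ ⟨h0, hD⟩
      exact ⟨hφ0 ▸ hφmono h0D hD h0, hφlt τ hD⟩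
    have hder : ∀ τ ∈ Set.Ioi (0:ℝ) ∩ D, HasDerivAt φ (γ * Real.sqrt (F (φ τ))) τ := by
      rintro τ ⟨h0, hD⟩
      have h := hφderiv τ hD
      rwa [max_eq_left (hφnonneg τ hD (le_of_lt h0))] at h
    have key : ∀ n : ℕ, ContDiffOn ℝ n φ (Set.Ioi (0:ℝ) ∩ D) := by
      intro n
      induction n with
      | zero =>
        rw [Nat.cast_zero, contDiffOn_zero]
        exact fun τ hτ => (hder τ hτ).continuousAt.continuousWithinAt
      | succ n ih =>
        rw [show ((n + 1 : ℕ) : WithTop ℕ∞) = (n : WithTop ℕ∞) + 1 by push_cast; ring,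
          contDiffOn_succ_iff_deriv_of_isOpen hUopen]
        refine ⟨fun τ hτ => (hder τ hτ).differentiableAt.differentiableWithinAt, ?_, ?_⟩
        · intro h
          exfalso
          exact (WithTop.natCast_ne_top n) h
        · apply ContDiffOn.congr (f := fun τ => γ * Real.sqrt (F (φ τ)))
          · intro τ hτ
            have hcomp : ContDiffWithinAt ℝ n (F ∘ φ) (Set.Ioi (0:ℝ) ∩ D) τ := by
              apply ContDiffOn.comp (hFs.of_le ?_) ih hφIoo τ hτ
              exact_mod_cast le_top
            have hsq : ContDiffWithinAt ℝ n (fun τ => Real.sqrt (F (φ τ)))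
                (Set.Ioi (0:ℝ) ∩ D) τ := by
              have hne : F (φ τ) ≠ 0 := (hFpos _ (Set.mem_Ico_of_Ioo (hφIoo τ hτ))).ne'
              exact (Real.contDiffAt_sqrt hne).comp_contDiffWithinAt τ hcomp
            exact contDiffWithinAt_const.mul hsq
          · intro τ hτ
            exact (hder τ hτ).deriv
    exact contDiffOn_infty.2 key
  · -- bounds
    rintro τ ⟨h0, hlt⟩
    have hD : τ ∈ D := ((hSmem τ).1 ⟨h0, hlt⟩).2
    exact ⟨hφnonneg τ hD h0, hφlt τ hD⟩
  · -- strict monotonicity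
    rintro x ⟨hx0, hxa⟩ y ⟨hy0, hya⟩ hxy
    exact hφmono ((hSmem x).1 ⟨hx0, hxa⟩).2 ((hSmem y).1 ⟨hy0, hya⟩).2 hxy
  · -- limit at a
    rw [tendsto_order]
    constructor
    · intro b hb
      set t : ℝ := max b 0 with ht_def
      have ht : t < t₀ := max_lt hb ht₀
      have ht0 : 0 ≤ t := le_max_right _ _
      have hGta : ((G t : ℝ) : EReal) < a := by
        rw [ha_iff]
        refine ⟨(t + t₀)/2, by linarith, by linarith, ?_⟩
        exact hGmono ht (by linarith : (t + t₀)/2 < t₀) (by linarith)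
      have h1 : ∀ᶠ τ : ℝ in (Filter.comap (fun x : ℝ => (x : EReal)) (nhds a)
          ⊓ Filter.principal {τ : ℝ | 0 ≤ τ ∧ (τ : EReal) < a}), ((τ : ℝ) : EReal) ∈ Set.Ioi ((G t : ℝ) : EReal) :=
        Filter.mem_inf_of_left (Filter.preimage_mem_comap (Ioi_mem_nhds hGta))
      have h2 : ∀ᶠ τ : ℝ in (Filter.comap (fun x : ℝ => (x : EReal)) (nhds a)
          ⊓ Filter.principal {τ : ℝ | 0 ≤ τ ∧ (τ : EReal) < a}),
          τ ∈ {τ : ℝ | 0 ≤ τ ∧ (τ : EReal) < a} :=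
        Filter.mem_inf_of_right (Filter.mem_principal_self _)
      filter_upwards [h1, h2] with τ hτ1 hτ2
      have hGtτ : G t < τ := by simpa using hτ1
      have hτD : τ ∈ D := ((hSmem τ).1 hτ2).2
      have hGtDm : G t ∈ D := hGtD t ht
      have := hφmono hGtDm hτD hGtτ
      rw [hφG t ht] at this
      calc b ≤ t := le_max_left _ _
      _ < φ τ := this
    · intro b hb
      have h2 : ∀ᶠ τ : ℝ in (Filter.comap (fun x : ℝ => (x : EReal)) (nhds a)
          ⊓ Filter.principal {τ : ℝ | 0 ≤ τ ∧ (τ : EReal) < a}),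
          τ ∈ {τ : ℝ | 0 ≤ τ ∧ (τ : EReal) < a} :=
        Filter.mem_inf_of_right (Filter.mem_principal_self _)
      filter_upwards [h2] with τ hτ2
      have hτD : τ ∈ D := ((hSmem τ).1 hτ2).2
      exact lt_trans (hφlt τ hτD) hb
end

section
/- Assume that λ vanishes identically on some interval (−∞, T], that ω₀ = 1, that σ is fine-tuned so that m + 2·(κ²/n²)·σ·ρ₀ = 0, and that Λ satisfies (2/(n(n+1)))·Λ = −(κ²/n²)·σ² (with the paper's normalization κ² = n² this reads (2/(n(n+1)))Λ = −σ²). Then every brane scale function f satisfies, for all τ with f(τ) ≤ T, the identity f′(τ)²·e^{2n·f(τ)} = (κ²/n²)·ρ₀² − κ̃·e^{2n·f(τ)}; in particular f′²e^{2nf}, as a function of the variable s = e^{n f}, equals the even polynomial (κ²/n²)ρ₀² − κ̃·s² near the singularity. -/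
/-- If `lam` vanishes on `(-∞, T]`, `ω₀ = 1`, `σ` is fine-tuned so that
`m + 2 (κ²/n²) σ ρ₀ = 0`, and `(2/(n(n+1))) Λ = -(κ²/n²) σ²`, then every brane scale
function satisfies `f'² e^{2nf} = (κ²/n²) ρ₀² - κt e^{2nf}` wherever `f ≤ T`; i.e.
`f'² e^{2nf}` is the even polynomial `(κ²/n²) ρ₀² - κt s²` in the variable
`s = e^{nf}` near the singularity. -/
theorem smooth_transition_flow_criterion
    (n : ℕ) (hn : 3 ≤ n)
    (m Λ κt κ σ ω₀ ρ₀ : ℝ)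
    (hm : 0 < m) (hΛ : Λ ≤ 0)
    (hκt : κt = -1 ∨ κt = 0 ∨ κt = 1) (hΛκt : Λ = 0 → κt = 1)
    (hκ : κ ≠ 0) (hρ₀ : 0 < ρ₀)
    (lam μt : ℝ → ℝ)
    (hlam : ContDiff ℝ (⊤ : ℕ∞) lam)
    (hlam0 : Filter.Tendsto lam Filter.atBot (nhds 0))
    (hμt : ∀ t : ℝ, HasDerivAt μt (lam t) t)
    (hμt0 : Filter.Tendsto μt Filter.atBot (nhds 0))
    (a : ℝ) (ha : 0 < a) (f : ℝ → ℝ)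
    (hf : ContDiffOn ℝ (⊤ : ℕ∞) f (Set.Ioo (-a) 0))
    (hf' : ∀ τ ∈ Set.Ioo (-a) (0:ℝ), deriv f τ < 0)
    (hfb : Filter.Tendsto f (nhdsWithin 0 (Set.Iio 0)) Filter.atBot)
    (hFried : ∀ τ ∈ Set.Ioo (-a) (0:ℝ),
      (deriv f τ) ^ 2
        = m * Real.exp (-((n : ℝ) - 1) * f τ)
          + (2 * Λ / ((n : ℝ) * ((n : ℝ) + 1))) * Real.exp (2 * f τ) - κt
          + (κ ^ 2 / (n : ℝ) ^ 2)
            * (σ + ρ₀ * Real.exp (-((n : ℝ) + ω₀) * f τ - μt (f τ))) ^ 2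
            * Real.exp (2 * f τ))
    (T : ℝ) (hT : ∀ t ≤ T, lam t = 0)
    (hω₀ : ω₀ = 1)
    (hfine : m + 2 * (κ ^ 2 / (n : ℝ) ^ 2) * σ * ρ₀ = 0)
    (hΛσ : 2 / ((n : ℝ) * ((n : ℝ) + 1)) * Λ = -(κ ^ 2 / (n : ℝ) ^ 2) * σ ^ 2) :
    ∀ τ ∈ Set.Ioo (-a) (0:ℝ), f τ ≤ T →
      (deriv f τ) ^ 2 * Real.exp (2 * (n : ℝ) * f τ)
        = κ ^ 2 / (n : ℝ) ^ 2 * ρ₀ ^ 2 - κt * (Real.exp ((n : ℝ) * f τ)) ^ 2 := by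
  -- Step 1: μt vanishes on (-∞, T]
  have hμzero : ∀ t ≤ T, μt t = 0 := by
    have hconst : ∀ s t, s ≤ t → t ≤ T → μt t = μt s := by
      intro s t hst htT
      have hcont : ContinuousOn μt (Set.Icc s t) :=
        fun y _ => ((hμt y).continuousAt).continuousWithinAt
      have hderiv : ∀ y ∈ Set.Ico s t, HasDerivWithinAt μt 0 (Set.Ici y) y := by
        intro y hy
        have h0 : lam y = 0 := hT y (le_trans hy.2.le htT)
        exact (h0 ▸ (hμt y).hasDerivWithinAt)
      exact constant_of_has_deriv_right_zero hcont hderiv t (Set.right_mem_Icc.2 hst)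
    intro t ht
    have hev : ∀ᶠ s in Filter.atBot, μt s = μt t := by
      filter_upwards [Filter.eventually_le_atBot t] with s hs
      exact (hconst s t hs ht).symm
    have hlim : Filter.Tendsto μt Filter.atBot (nhds (μt t)) := by
      rw [Filter.tendsto_congr' hev]
      exact tendsto_const_nhds
    exact tendsto_nhds_unique hlim hμt0
  -- Step 2: algebra
  intro τ hτ hfT
  set x := f τ with hx
  have key := hFried τ hτ
  rw [hω₀, hμzero x hfT] at key
  set v := Real.exp x with hv
  have hv0 : 0 < v := Real.exp_pos x
  have eE : Real.exp ((n : ℝ) * x) = v ^ n := by rw [Real.exp_nat_mul]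
  have eB : Real.exp (2 * x) = v ^ 2 := by
    rw [show (2:ℝ) * x = ((2:ℕ):ℝ) * x by norm_num, Real.exp_nat_mul]
  have eN1 : Real.exp (((n:ℝ) + 1) * x) = v ^ (n + 1) := by
    rw [show ((n:ℝ) + 1) * x = ((n + 1 : ℕ):ℝ) * x by push_cast; ring, Real.exp_nat_mul]
  have eA : Real.exp (-((n : ℝ) - 1) * x) = v ^ 2 / v ^ (n + 1) := by
    rw [show -((n:ℝ) - 1) * x = 2 * x - ((n:ℝ) + 1) * x by ring, Real.exp_sub, eB, eN1]
  have eC : Real.exp (-((n : ℝ) + 1) * x - 0) = 1 / v ^ (n + 1) := by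
    rw [show -((n:ℝ) + 1) * x - 0 = 0 - ((n:ℝ) + 1) * x by ring, Real.exp_sub, eN1,
      Real.exp_zero]
  have eD : Real.exp (2 * (n : ℝ) * x) = (v ^ n) ^ 2 := by
    rw [show 2 * (n:ℝ) * x = ((2 * n : ℕ):ℝ) * x by push_cast; ring, Real.exp_nat_mul,
      pow_mul, sq (v ^ n)]
    ring
  have hm' : m = -(2 * (κ ^ 2 / (n : ℝ) ^ 2) * σ * ρ₀) := by linarith
  have hL' : 2 * Λ / ((n : ℝ) * ((n : ℝ) + 1)) = -(κ ^ 2 / (n : ℝ) ^ 2) * σ ^ 2 := by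
    rw [show 2 * Λ / ((n : ℝ) * ((n : ℝ) + 1)) = 2 / ((n : ℝ) * ((n : ℝ) + 1)) * Λ by ring,
      hΛσ]
  rw [key, eA, eB, eC, eD, eE, hm', hL']
  have hne : v ^ (n + 1) ≠ 0 := by positivity
  field_simp
  ring
end
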